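/- Let (X_n^j), j = 1,…,N, be independent copies of a Markov chain each started from the QSD ν of a state S, with first exit times τʲ and exit positions X^j_{τʲ}. With K = min{j : τʲ = min(τ¹,…,τᴺ)} and X_acc = X^K_{τᴷ}, T_acc = N(min(τ¹,…,τᴺ)−1) + K, the pair (X_acc, T_acc) has the same joint law as (X_τ, τ) for a single chain started from ν; in particular X_acc ∼ X_τ, T_acc is geometric with parameter p = P^ν(X_1 ∉ S), and X_acc and T_acc are independent. -/

import Mathlib

/-!
Each exit pair `(τʲ, Xʲ)` has the law `Geom(p) ⊗ η` of `(τ, X_τ)`. Outside the null event that some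
`τʲ` vanishes, `{X_acc ∈ B, T_acc = N m + k + 1}` is the event that replica `k` exits at time
`m + 1` into `B` while the replicas before it exit after `m + 1` and those after it after `m`.
By independence its probability is `q^{(m+1)k} · q^m p η(B) · q^{m(N-k-1)} = η(B) · p q^{Nm+k}`
with `q = 1 - p`, which is `P(X_τ ∈ B, τ = Nm + k + 1)`.
-/

open MeasureTheory ProbabilityTheory

theorem Nat.measurable_sInf : Measurable (sInf : Set ℕ → ℕ) := by
  refine measurable_to_countable' fun n => ?_
  have hpre : sInf ⁻¹' {n} =
      {s : Set ℕ | n ∈ s ∧ (∀ m < n, m ∉ s) ∨ n = 0 ∧ ∀ m, m ∉ s} := by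
    ext s
    rcases s.eq_empty_or_nonempty with rfl | hs
    · simp [eq_comm]
    · have hne : ¬ ∀ m, m ∉ s := fun h => hs.ne_empty (Set.eq_empty_of_forall_notMem h)
      simp only [Set.mem_preimage, Set.mem_singleton_iff, Set.mem_ofPred_eq, hne, and_false,
        or_false]
      refine ⟨fun h => h ▸ ⟨Nat.sInf_mem hs, fun m => Nat.notMem_of_lt_sInf⟩, fun ⟨hn, hlt⟩ => ?_⟩
      exact le_antisymm (Nat.sInf_le hn) (not_lt.1 fun h => hlt _ h (Nat.sInf_mem hs))
  rw [hpre]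
  exact measurableSet_setOfPred.2 (by fun_prop)

theorem MeasureTheory.Measure.ext_of_prod_singleton {α β : Type*} [MeasurableSpace α]
    [MeasurableSpace β] [Countable β] [MeasurableSingletonClass β] {ν₁ ν₂ : Measure (α × β)}
    (h : ∀ s, MeasurableSet s → ∀ b, ν₁ (s ×ˢ {b}) = ν₂ (s ×ˢ {b})) : ν₁ = ν₂ := by
  ext S hS
  have hslice : ∀ b, MeasurableSet ((fun a => (a, b)) ⁻¹' S) := fun b => measurable_prodMk_right hS
  have hS_eq : S = ⋃ b, ((fun a => (a, b)) ⁻¹' S) ×ˢ {b} := by ext ⟨a, b⟩; simp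
  have hdisj : Pairwise
      (Function.onFun Disjoint fun b => ((fun a => (a, b)) ⁻¹' S) ×ˢ ({b} : Set β)) :=
    fun b b' hb => Set.disjoint_prod.2 (Or.inr (Set.disjoint_singleton.2 hb))
  have hmeas : ∀ b, MeasurableSet (((fun a => (a, b)) ⁻¹' S) ×ˢ ({b} : Set β)) :=
    fun b => (hslice b).prod (measurableSet_singleton b)
  rw [hS_eq, measure_iUnion hdisj hmeas, measure_iUnion hdisj hmeas]
  exact tsum_congr fun b => h _ (hslice b) b

theorem Finset.prod_range_ite_lt_ite_eq {M : Type*} [CommMonoid M] {N k : ℕ} (hk : k < N)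
    (a b c : M) :
    ∏ j ∈ Finset.range N, (if j < k then a else if j = k then b else c) =
      a ^ k * b * c ^ (N - (k + 1)) := by
  obtain ⟨d, rfl⟩ : ∃ d, N = k + 1 + d := ⟨N - (k + 1), by omega⟩
  have hlt : ∀ x, ¬ k + 1 + x < k := by omega
  have hne : ∀ x, k + 1 + x ≠ k := by omega
  rw [Finset.prod_range_add, Finset.prod_range_succ]
  simp +contextual [Finset.prod_ite_of_true, hlt, hne]

theorem Nat.mul_add_eq_mul_add_iff {N a b c d : ℕ} (hb : b < N) (hd : d < N) :
    N * a + b = N * c + d ↔ a = c ∧ b = d := by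
  refine ⟨fun h => ?_, fun ⟨rfl, rfl⟩ => rfl⟩
  have hN : 0 < N := by omega
  have hdiv := congrArg (· / N) h
  have hmod := congrArg (· % N) h
  simp only [Nat.mul_add_div hN, Nat.div_eq_of_lt hb, Nat.div_eq_of_lt hd, Nat.mul_add_mod,
    Nat.mod_eq_of_lt hb, Nat.mod_eq_of_lt hd, add_zero] at hdiv hmod
  exact ⟨hdiv, hmod⟩

section GeometricTail

variable {ρ : Measure ℕ} {Q : ENNReal}

theorem measure_singleton_zero_of_tail_eq_pow [IsProbabilityMeasure ρ]
    (hρ : ∀ t, ρ (Set.Ioi t) = Q ^ t) : ρ {0} = 0 := by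
  have hzero : ({0} : Set ℕ) = (Set.Ioi 0)ᶜ := by ext n; simp
  rw [hzero, prob_compl_eq_one_sub measurableSet_Ioi, hρ, pow_zero, tsub_self]

theorem measure_singleton_succ_of_tail_eq_pow [IsFiniteMeasure ρ]
    (hρ : ∀ t, ρ (Set.Ioi t) = Q ^ t) (s : ℕ) : ρ {s + 1} = Q ^ s * (1 - Q) := by
  have hdiff : ({s + 1} : Set ℕ) = Set.Ioi s \ Set.Ioi (s + 1) := by ext n; simp; omega
  rw [hdiff, measure_sdiff (Set.Ioi_subset_Ioi s.le_succ) measurableSet_Ioi.nullMeasurableSet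
    (measure_ne_top _ _), hρ, hρ, ENNReal.mul_sub fun _ _ => hρ s ▸ measure_ne_top ρ _, mul_one,
    pow_succ]

end GeometricTail

section Replicas

noncomputable def minExit (N : ℕ) (a : ℕ → ℕ) : ℕ := sInf {t | ∃ i < N, a i = t}

noncomputable def firstExiter (N : ℕ) (a : ℕ → ℕ) : ℕ := sInf {j | j < N ∧ a j = minExit N a}

noncomputable def acceptedTime (N : ℕ) (a : ℕ → ℕ) : ℕ :=
  N * (minExit N a - 1) + (firstExiter N a + 1)

/-- The condition on replica `j` in the event that replica `k` is the first to exit, at time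
`m + 1`, into `B`. -/
def exitConstraint {E : Type*} (k m : ℕ) (B : Set E) (j : ℕ) : Set (ℕ × E) :=
  if j < k then Set.Ioi (m + 1) ×ˢ Set.univ
  else if j = k then {m + 1} ×ˢ B
  else Set.Ioi m ×ˢ Set.univ

variable {N : ℕ} {a : ℕ → ℕ}

theorem isLeast_minExit (hN : 0 < N) : IsLeast {t | ∃ i < N, a i = t} (minExit N a) :=
  isLeast_csInf ⟨a 0, 0, hN, rfl⟩

theorem isLeast_firstExiter (hN : 0 < N) :
    IsLeast {j | j < N ∧ a j = minExit N a} (firstExiter N a) :=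
  isLeast_csInf (by obtain ⟨i, hi, h⟩ := (isLeast_minExit (a := a) hN).1; exact ⟨i, hi, h⟩)

theorem minExit_eq_and_firstExiter_eq_iff {k m : ℕ} (hk : k < N) :
    minExit N a = m ∧ firstExiter N a = k ↔
      (∀ j < k, m < a j) ∧ a k = m ∧ ∀ j, k < j → j < N → m ≤ a j := by
  have hN : 0 < N := by omega
  constructor
  · rintro ⟨rfl, rfl⟩
    obtain ⟨⟨-, hat⟩, hK⟩ := isLeast_firstExiter (a := a) hN
    have hM := (isLeast_minExit (a := a) hN).2
    refine ⟨fun j hj => lt_of_le_of_ne (hM ⟨j, hj.trans hk, rfl⟩) fun h => ?_, hat,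
      fun j _ hj => hM ⟨j, hj, rfl⟩⟩
    exact absurd (hK ⟨hj.trans hk, h.symm⟩) (not_le.2 hj)
  · rintro ⟨hbefore, hat, hafter⟩
    have hM : minExit N a = m := by
      refine IsLeast.csInf_eq ⟨⟨k, hk, hat⟩, ?_⟩
      rintro _ ⟨i, hi, rfl⟩
      rcases lt_trichotomy i k with h | rfl | h
      exacts [(hbefore i h).le, hat.ge, hafter i h hi]
    refine ⟨hM, IsLeast.csInf_eq ⟨⟨hk, hat.trans hM.symm⟩, fun j ⟨_, hj⟩ => ?_⟩⟩
    exact not_lt.1 fun h => (hbefore j h).ne (hj.trans hM).symm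

theorem acceptedTime_eq_iff {k m : ℕ} (hpos : ∀ j < N, 0 < a j) (hk : k < N) :
    acceptedTime N a = N * m + k + 1 ↔ minExit N a = m + 1 ∧ firstExiter N a = k := by
  have hN : 0 < N := by omega
  obtain ⟨i, hi, hai⟩ := (isLeast_minExit (a := a) hN).1
  have hM : 0 < minExit N a := hai ▸ hpos i hi
  rw [acceptedTime, ← add_assoc, Nat.add_right_cancel_iff,
    Nat.mul_add_eq_mul_add_iff (isLeast_firstExiter hN).1.1 hk]
  omega

theorem accepted_mem_iff {E : Type*} {x : ℕ → E} {B : Set E} {k m : ℕ}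
    (hpos : ∀ j < N, 0 < a j) (hk : k < N) :
    x (firstExiter N a) ∈ B ∧ acceptedTime N a = N * m + k + 1 ↔
      ∀ j < N, (a j, x j) ∈ exitConstraint k m B j := by
  rw [acceptedTime_eq_iff hpos hk]
  constructor
  · rintro ⟨hB, hM, hK⟩
    obtain ⟨hbefore, hat, hafter⟩ := (minExit_eq_and_firstExiter_eq_iff hk).1 ⟨hM, hK⟩
    intro j hj
    unfold exitConstraint
    split_ifs with hjk hjk'
    · exact ⟨hbefore j hjk, trivial⟩
    · subst hjk'
      exact ⟨hat, hK ▸ hB⟩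
    · exact ⟨hafter j (by omega) hj, trivial⟩
  · intro h
    have hbefore : ∀ j < k, m + 1 < a j := fun j hj => by
      simpa [exitConstraint, hj] using h j (hj.trans hk)
    have hat : a k = m + 1 ∧ x k ∈ B := by simpa [exitConstraint] using h k hk
    have hafter : ∀ j, k < j → j < N → m + 1 ≤ a j := fun j hkj hj => by
      simpa [exitConstraint, hkj.not_gt, hkj.ne'] using h j hj
    obtain ⟨hM, hK⟩ := (minExit_eq_and_firstExiter_eq_iff hk).2 ⟨hbefore, hat.1, hafter⟩
    exact ⟨hK ▸ hat.2, hM, hK⟩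

end Replicas

theorem ProbabilityTheory.iIndepFun.measure_forall_lt_mem_eq_prod {Ω β : Type*}
    [MeasurableSpace Ω] [MeasurableSpace β] {μ : Measure Ω} {N : ℕ} {Z : ℕ → Ω → β}
    (hindep : iIndepFun (fun j : Fin N => Z j) μ) {C : ℕ → Set β}
    (hC : ∀ j, MeasurableSet (C j)) :
    μ {ω | ∀ j < N, Z j ω ∈ C j} = ∏ j ∈ Finset.range N, μ (Z j ⁻¹' C j) := by
  have hinter : {ω | ∀ j < N, Z j ω ∈ C j} =
      ⋂ j ∈ (Finset.univ : Finset (Fin N)), Z j ⁻¹' C j := by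
    ext ω; simp [Fin.forall_iff]
  rw [hinter, hindep.measure_inter_preimage_eq_mul _ fun j _ => hC j,
    Fin.prod_univ_eq_prod_range fun j => μ (Z j ⁻¹' C j)]

section ParallelStep

variable {Ω E : Type*} [MeasurableSpace Ω] [MeasurableSpace E] {μ : Measure Ω}
  {τ : ℕ → Ω → ℕ} {X : ℕ → Ω → E} {N : ℕ}

theorem measurable_minExit (hτ : ∀ j, Measurable (τ j)) :
    Measurable fun ω => minExit N (τ · ω) :=
  Nat.measurable_sInf.comp (measurable_set_iff.2 fun n => by
    simp only [Set.mem_ofPred_eq]; fun_prop)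

theorem measurable_firstExiter (hτ : ∀ j, Measurable (τ j)) :
    Measurable fun ω => firstExiter N (τ · ω) :=
  Nat.measurable_sInf.comp (measurable_set_iff.2 fun n => by
    have hM := measurable_minExit (N := N) hτ
    simp only [Set.mem_ofPred_eq]; fun_prop)

theorem measurable_acceptedTime (hτ : ∀ j, Measurable (τ j)) :
    Measurable fun ω => acceptedTime N (τ · ω) := by
  have hM := measurable_minExit (N := N) hτ
  have hK := measurable_firstExiter (N := N) hτ
  unfold acceptedTime
  fun_prop

theorem measurable_accepted (hτ : ∀ j, Measurable (τ j)) (hX : ∀ j, Measurable (X j)) :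
    Measurable fun ω => (X (firstExiter N (τ · ω)) ω, acceptedTime N (τ · ω)) :=
  ((measurable_from_prod_countable_left (f := fun z : Ω × ℕ => X z.2 z.1) hX).comp
    (measurable_id.prodMk (measurable_firstExiter hτ))).prodMk (measurable_acceptedTime hτ)

variable {ρ : Measure ℕ} [IsProbabilityMeasure ρ] {η : Measure E} [IsProbabilityMeasure η]
  {Q : ENNReal}

theorem prod_measure_exitConstraint (hρ : ∀ t, ρ (Set.Ioi t) = Q ^ t) {k m : ℕ} (hk : k < N)
    (B : Set E) :
    ∏ j ∈ Finset.range N, ρ.prod η (exitConstraint k m B j) = η B * ρ {N * m + k + 1} := by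
  have hvalue : ∀ j, ρ.prod η (exitConstraint k m B j) =
      if j < k then Q ^ (m + 1) else if j = k then Q ^ m * (1 - Q) * η B else Q ^ m := by
    intro j
    unfold exitConstraint
    split_ifs <;>
      simp [Measure.prod_prod, hρ, measure_singleton_succ_of_tail_eq_pow hρ]
  obtain ⟨d, rfl⟩ : ∃ d, N = k + 1 + d := ⟨N - (k + 1), by omega⟩
  rw [Finset.prod_congr rfl fun j _ => hvalue j, Finset.prod_range_ite_lt_ite_eq hk,
    measure_singleton_succ_of_tail_eq_pow hρ, Nat.add_sub_cancel_left]
  ring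

theorem measure_accepted_mem_prod_singleton (hρ : ∀ t, ρ (Set.Ioi t) = Q ^ t)
    (hτ : ∀ j, Measurable (τ j)) (hX : ∀ j, Measurable (X j))
    (hindep : iIndepFun (fun j : Fin N => fun ω => (τ j ω, X j ω)) μ)
    (hlaw : ∀ j < N, μ.map (fun ω => (τ j ω, X j ω)) = ρ.prod η)
    (hpos : ∀ᵐ ω ∂μ, ∀ j < N, 0 < τ j ω) {k m : ℕ} (hk : k < N)
    {B : Set E} (hB : MeasurableSet B) :
    μ.map (fun ω => (X (firstExiter N (τ · ω)) ω, acceptedTime N (τ · ω)))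
      (B ×ˢ {N * m + k + 1}) = η B * ρ {N * m + k + 1} := by
  have hC : ∀ j, MeasurableSet (exitConstraint k m B j) := fun j => by
    unfold exitConstraint
    split_ifs
    exacts [measurableSet_Ioi.prod .univ, (measurableSet_singleton _).prod hB,
      measurableSet_Ioi.prod .univ]
  have hevent : (fun ω => (X (firstExiter N (τ · ω)) ω, acceptedTime N (τ · ω))) ⁻¹'
        (B ×ˢ {N * m + k + 1}) =ᵐ[μ] {ω | ∀ j < N, (τ j ω, X j ω) ∈ exitConstraint k m B j} :=
    Filter.eventuallyEq_set.2 (hpos.mono fun ω hω => accepted_mem_iff (x := (X · ω)) hω hk)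
  rw [Measure.map_apply (measurable_accepted hτ hX) (hB.prod (measurableSet_singleton _)),
    measure_congr hevent, hindep.measure_forall_lt_mem_eq_prod hC,
    ← prod_measure_exitConstraint hρ hk B]
  refine Finset.prod_congr rfl fun j hj => ?_
  rw [← hlaw j (Finset.mem_range.1 hj), Measure.map_apply ((hτ j).prodMk (hX j)) (hC j)]

theorem map_accepted_eq_prod (hN : 0 < N) (hρ : ∀ t, ρ (Set.Ioi t) = Q ^ t)
    (hτ : ∀ j, Measurable (τ j)) (hX : ∀ j, Measurable (X j))
    (hindep : iIndepFun (fun j : Fin N => fun ω => (τ j ω, X j ω)) μ)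
    (hlaw : ∀ j < N, μ.map (fun ω => (τ j ω, X j ω)) = ρ.prod η) :
    μ.map (fun ω => (X (firstExiter N (τ · ω)) ω, acceptedTime N (τ · ω))) = η.prod ρ := by
  have hzero : ∀ j < N, μ {ω | τ j ω = 0} = 0 := fun j hj => by
    have hpre : {ω | τ j ω = 0} = (fun ω => (τ j ω, X j ω)) ⁻¹' ({0} ×ˢ Set.univ) := by
      ext ω; simp
    rw [hpre, ← Measure.map_apply ((hτ j).prodMk (hX j))
      ((measurableSet_singleton 0).prod .univ), hlaw j hj, Measure.prod_prod,
      measure_singleton_zero_of_tail_eq_pow hρ, zero_mul]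
  have hpos : ∀ᵐ ω ∂μ, ∀ j < N, 0 < τ j ω := ae_all_iff.2 fun j =>
    Filter.eventually_imp_distrib_left.2 fun hj => by
      simpa [Nat.pos_iff_ne_zero] using measure_eq_zero_iff_ae_notMem.1 (hzero j hj)
  refine Measure.ext_of_prod_singleton fun B hB t => ?_
  rw [Measure.prod_prod]
  rcases t with _ | s
  · rw [measure_singleton_zero_of_tail_eq_pow hρ, mul_zero, Measure.map_apply
      (measurable_accepted hτ hX) (hB.prod (measurableSet_singleton 0))]
    convert measure_empty (μ := μ)
    ext ω
    simp [acceptedTime]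
  · obtain ⟨m, k, hk, rfl⟩ : ∃ m k, k < N ∧ s = N * m + k :=
      ⟨s / N, s % N, Nat.mod_lt s hN, (Nat.div_add_mod s N).symm⟩
    exact measure_accepted_mem_prod_singleton hρ hτ hX hindep hlaw hpos hk hB

end ParallelStep

theorem parRep_parallel_step_exact_general
    {Ω E : Type*} [MeasurableSpace Ω] [MeasurableSpace E]
    (μ : Measure Ω) [IsProbabilityMeasure μ]
    (N : ℕ) (hN : 1 ≤ N) (p : ℝ) (hp1 : p < 1)
    (T₀ : Ω → ℕ) (Y₀ : Ω → E) (hT₀meas : Measurable T₀) (hY₀meas : Measurable Y₀)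
    (hT₀geom : ∀ t : ℕ, μ {ω | t < T₀ ω} = ENNReal.ofReal ((1 - p) ^ t))
    (hT₀Y₀ : IndepFun T₀ Y₀ μ)
    (τ : ℕ → Ω → ℕ) (X : ℕ → Ω → E)
    (hτmeas : ∀ j, Measurable (τ j)) (hXmeas : ∀ j, Measurable (X j))
    (hindep : iIndepFun
      (fun j : Fin N => fun ω => (τ j ω, X j ω)) μ)
    (hlaw : ∀ j < N,
      Measure.map (fun ω => (τ j ω, X j ω)) μ =
        Measure.map (fun ω => (T₀ ω, Y₀ ω)) μ)
    (K : Ω → ℕ)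
    (hK : ∀ ω, K ω = sInf {j | j < N ∧ τ j ω = sInf {t | ∃ i < N, τ i ω = t}})
    (Xacc : Ω → E) (hXacc : ∀ ω, Xacc ω = X (K ω) ω)
    (Tacc : Ω → ℕ)
    (hTacc : ∀ ω, Tacc ω = N * (sInf {t | ∃ i < N, τ i ω = t} - 1) + (K ω + 1)) :
    Measure.map (fun ω => (Xacc ω, Tacc ω)) μ =
        Measure.map (fun ω => (Y₀ ω, T₀ ω)) μ ∧
      (∀ t : ℕ, μ {ω | t < Tacc ω} = ENNReal.ofReal ((1 - p) ^ t)) ∧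
      IndepFun Xacc Tacc μ := by
  obtain rfl : K = fun ω => firstExiter N (τ · ω) := funext hK
  obtain rfl : Xacc = fun ω => X (firstExiter N (τ · ω)) ω := funext hXacc
  obtain rfl : Tacc = fun ω => acceptedTime N (τ · ω) := funext hTacc
  have := Measure.isProbabilityMeasure_map (μ := μ) hT₀meas.aemeasurable
  have := Measure.isProbabilityMeasure_map (μ := μ) hY₀meas.aemeasurable
  have hgeom : ∀ t, μ.map T₀ (Set.Ioi t) = ENNReal.ofReal (1 - p) ^ t := fun t => by
    rw [Measure.map_apply hT₀meas measurableSet_Ioi, ← ENNReal.ofReal_pow (by linarith)]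
    exact hT₀geom t
  have hmap : μ.map (fun ω => (X (firstExiter N (τ · ω)) ω, acceptedTime N (τ · ω))) =
      μ.map (fun ω => (Y₀ ω, T₀ ω)) := by
    rw [hT₀Y₀.symm.map_prod_eq_prod_map_map hY₀meas.aemeasurable hT₀meas.aemeasurable]
    refine map_accepted_eq_prod hN hgeom hτmeas hXmeas hindep fun j hj => ?_
    rw [hlaw j hj, hT₀Y₀.map_prod_eq_prod_map_map hT₀meas.aemeasurable hY₀meas.aemeasurable]
  have hident : IdentDistrib (fun ω => (Y₀ ω, T₀ ω))
      (fun ω => (X (firstExiter N (τ · ω)) ω, acceptedTime N (τ · ω))) μ μ :=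
    ⟨(hY₀meas.prodMk hT₀meas).aemeasurable, (measurable_accepted hτmeas hXmeas).aemeasurable,
      hmap.symm⟩
  refine ⟨hmap, fun t => ?_, indepFun_of_identDistrib_pair hT₀Y₀.symm hident⟩
  rw [← hT₀geom t]
  exact ((hident.comp measurable_snd).measure_mem_eq measurableSet_Ioi).symm

/-- exactness of the ParRep parallel step with `T_poll = 1`.
The `N` replicas, started i.i.d. from the QSD `ν` of the state `S`, have exit
times `τʲ` and exit positions `Xʲ`; since the replicas start from the QSD,
each pair `(τʲ, Xʲ)` has the law of `(τ, X_τ)` for a single chain started from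
`ν` — encoded here by a reference pair `(T₀, Y₀)` — with `τʲ` geometric of
parameter `p = P^ν(X_1 ∉ S)` and independent of `Xʲ` (Theorem 2 of the paper).
Replicas are zero-indexed, so the paper's `K` is `K+1` and
`T_acc = N(min τ − 1) + K + 1`.  Then `(X_acc, T_acc) ∼ (X_τ, τ)`; in
particular `X_acc ∼ X_τ`, `T_acc` is geometric(p), and `X_acc` and `T_acc`
are independent. -/
theorem parRep_parallel_step_exact
    {Ω E : Type*} [MeasurableSpace Ω] [MeasurableSpace E]
    (μ : Measure Ω) [IsProbabilityMeasure μ]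
    (N : ℕ) (hN : 1 ≤ N) (p : ℝ) (hp0 : 0 < p) (hp1 : p < 1)
    (T₀ : Ω → ℕ) (Y₀ : Ω → E) (hT₀meas : Measurable T₀) (hY₀meas : Measurable Y₀)
    (hT₀geom : ∀ t : ℕ, μ {ω | t < T₀ ω} = ENNReal.ofReal ((1 - p) ^ t))
    (hT₀Y₀ : IndepFun T₀ Y₀ μ)
    (τ : ℕ → Ω → ℕ) (X : ℕ → Ω → E)
    (hτmeas : ∀ j, Measurable (τ j)) (hXmeas : ∀ j, Measurable (X j))
    (hindep : iIndepFun
      (fun j : Fin N => fun ω => (τ j ω, X j ω)) μ)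
    (hlaw : ∀ j < N,
      Measure.map (fun ω => (τ j ω, X j ω)) μ =
        Measure.map (fun ω => (T₀ ω, Y₀ ω)) μ)
    (K : Ω → ℕ)
    (hK : ∀ ω, K ω = sInf {j | j < N ∧ τ j ω = sInf {t | ∃ i < N, τ i ω = t}})
    (Xacc : Ω → E) (hXacc : ∀ ω, Xacc ω = X (K ω) ω)
    (Tacc : Ω → ℕ)
    (hTacc : ∀ ω, Tacc ω = N * (sInf {t | ∃ i < N, τ i ω = t} - 1) + (K ω + 1)) :
    Measure.map (fun ω => (Xacc ω, Tacc ω)) μ =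
        Measure.map (fun ω => (Y₀ ω, T₀ ω)) μ ∧
      (∀ t : ℕ, μ {ω | t < Tacc ω} = ENNReal.ofReal ((1 - p) ^ t)) ∧
      IndepFun Xacc Tacc μ :=
  parRep_parallel_step_exact_general μ N hN p hp1 T₀ Y₀ hT₀meas hY₀meas hT₀geom hT₀Y₀ τ X hτmeas
    hXmeas hindep hlaw K hK Xacc hXacc Tacc hTacc
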